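/- Let n ≥ 1, k ≥ 1 an integer, and let ψ be a real-valued function on a punctured neighborhood of 0 in ℝⁿ admitting an admissible expansion starting at order 1: there exist homogeneous polynomials P_p of degree p and Q_{p−1} of degree p−1 on ℝⁿ (for 1 ≤ p ≤ k) such that ψ(ȳ) − Σ_{p=1}^{k} (P_p(ȳ) + |ȳ|·Q_{p−1}(ȳ)) is o_k(r^k). Then ψ² admits an admissible expansion starting at order 2 and with remainder one order better: there exist homogeneous polynomials P′_p of degree p and Q′_{p−1} of degree p−1 (for 2 ≤ p ≤ k+1) such that ψ(ȳ)² − Σ_{p=2}^{k+1} (P′_p(ȳ) + |ȳ|·Q′_{p−1}(ȳ)) is o_k(r^{k+1}). -/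

import Mathlib

/-!
Write `ψ = S + R` with `S = ∑ₚ (Pₚ + r Qₚ₋₁)` and `R = o_k(r^k)`. Each term `Pₚ + r Qₚ₋₁` is
smooth off the origin and positively homogeneous of degree `p`, so scaling from the unit sphere
bounds its `ℓ`-th derivative by `C r^(p-ℓ)`; in particular `S = O_k(r)`. The Leibniz rule gives
`O_k(r^a) · o_k(r^b) ⊆ o_k(r^(a+b))`. Hence `ψ² - S² = (2S + R) R = o_k(r^(k+1))`, as `k ≥ 1`.
In `S² = ∑_{p,q} (Pₚ + r Qₚ₋₁)(P_q + r Q_{q-1})` the products with `p + q > k + 1` are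
`o_k(r^(k+1))`, and the others regroup, using `r² = ∑ yᵢ²`, into admissible terms of orders
`2, …, k + 1`.
-/

open Filter Topology MeasureTheory

/-- `φ` is `o_m(r^k)` near the origin of `ℝⁿ` (punctured): `φ` is `C^m` on a punctured
ball around `0`, and for every `ℓ ≤ m` one has `‖y‖^(ℓ-k) ‖D^ℓ φ(y)‖ → 0` as `y → 0`,
`y ≠ 0`. -/
def IsLittleOCone (n m : ℕ) (k : ℤ) (φ : EuclideanSpace ℝ (Fin n) → ℝ) : Prop :=
  ∃ ε > (0 : ℝ), ContDiffOn ℝ (m : ℕ∞) φ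
      (Metric.ball (0 : EuclideanSpace ℝ (Fin n)) ε \ {0}) ∧
    ∀ ℓ : ℕ, ℓ ≤ m →
      Tendsto (fun y : EuclideanSpace ℝ (Fin n) =>
          ‖y‖ ^ ((ℓ : ℝ) - (k : ℝ)) * ‖iteratedFDeriv ℝ ℓ φ y‖)
        (𝓝[≠] (0 : EuclideanSpace ℝ (Fin n))) (𝓝 0)

open Asymptotics Set

section NormRpow

variable {E : Type*} [NormedAddCommGroup E]

theorem norm_rpow_add_eventuallyEq (a b : ℝ) :
    (fun y : E => ‖y‖ ^ (a + b)) =ᶠ[𝓝[≠] 0] fun y => ‖y‖ ^ a * ‖y‖ ^ b := by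
  filter_upwards [self_mem_nhdsWithin] with y hy
  exact Real.rpow_add (norm_pos_iff.2 hy) a b

theorem isBigO_norm_rpow_of_le {a b : ℝ} (hab : b ≤ a) :
    (fun y : E => ‖y‖ ^ a) =O[𝓝[≠] 0] fun y => ‖y‖ ^ b := by
  have hle : ∀ᶠ y in 𝓝[≠] (0 : E), ‖y‖ ≤ 1 :=
    eventually_nhdsWithin_of_eventually_nhds <|
      Filter.mem_of_superset (Metric.closedBall_mem_nhds 0 one_pos) fun y hy => by simpa using hy
  refine IsBigO.of_bound 1 ?_
  filter_upwards [self_mem_nhdsWithin, hle] with y hy0 hy1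
  rw [one_mul, Real.norm_of_nonneg (by positivity), Real.norm_of_nonneg (by positivity)]
  exact Real.rpow_le_rpow_of_exponent_ge (norm_pos_iff.2 hy0) hy1 hab

theorem isLittleO_norm_rpow_of_lt {a b : ℝ} (hab : b < a) :
    (fun y : E => ‖y‖ ^ a) =o[𝓝[≠] 0] fun y => ‖y‖ ^ b := by
  have hlim : Tendsto (fun y : E => ‖y‖ ^ (a - b)) (𝓝[≠] 0) (𝓝 0) := by
    have := (Real.continuousAt_rpow_const 0 (a - b) (Or.inr (sub_pos.2 hab).le)).tendsto
    rw [Real.zero_rpow (sub_pos.2 hab).ne'] at this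
    exact this.comp (tendsto_norm_nhdsNE_zero.mono_right nhdsWithin_le_nhds)
  have := ((isLittleO_one_iff ℝ).2 hlim).mul_isBigO (isBigO_refl (fun y : E => ‖y‖ ^ b) _)
  simp only [one_mul] at this
  refine this.congr' ?_ EventuallyEq.rfl
  simpa using (norm_rpow_add_eventuallyEq (E := E) (a - b) b).symm

theorem tendsto_norm_rpow_mul_norm_iff_isLittleO {F : Type*} [NormedAddCommGroup F] {g : E → F}
    {a b : ℝ} :
    Tendsto (fun y => ‖y‖ ^ (b - a) * ‖g y‖) (𝓝[≠] 0) (𝓝 0) ↔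
      g =o[𝓝[≠] 0] fun y => ‖y‖ ^ (a - b) := by
  rw [← isLittleO_norm_left, isLittleO_iff_tendsto']
  · refine tendsto_congr' ?_
    filter_upwards with y
    rw [div_eq_inv_mul, ← Real.rpow_neg (norm_nonneg y), neg_sub]
  · filter_upwards [self_mem_nhdsWithin] with y hy h0
    exact absurd h0 (Real.rpow_pos_of_pos (norm_pos_iff.2 hy) _).ne'

end NormRpow

section Smoothness

variable {𝕜 : Type*} [NontriviallyNormedField 𝕜] {E : Type*} [NormedAddCommGroup E]
  [NormedSpace 𝕜 E] {F : Type*} [NormedAddCommGroup F] [NormedSpace 𝕜 F]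

theorem exists_contDiffOn_ball_diff_iff {N : WithTop ℕ∞} {f : E → F} :
    (∃ ε > 0, ContDiffOn 𝕜 N f (Metric.ball 0 ε \ {0})) ↔
      ∀ᶠ y in 𝓝[≠] (0 : E), ContDiffAt 𝕜 N f y := by
  constructor
  · rintro ⟨ε, hε, hf⟩
    have hopen : IsOpen (Metric.ball (0 : E) ε \ {0}) := Metric.isOpen_ball.sdiff isClosed_singleton
    filter_upwards [sdiff_mem_nhdsWithin_compl (Metric.ball_mem_nhds 0 hε) _] with y hy
    exact hf.contDiffAt (hopen.mem_nhds hy)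
  · intro h
    obtain ⟨ε, hε, hsub⟩ := Metric.mem_nhdsWithin_iff.1 h
    exact ⟨ε, hε, fun y hy => (hsub hy).contDiffWithinAt⟩

theorem norm_iteratedFDeriv_mul_le_of_contDiffAt {A : Type*} [NormedRing A] [NormedAlgebra 𝕜 A]
    {f g : E → A} {N : ℕ} {x : E} (hf : ContDiffAt 𝕜 N f x) (hg : ContDiffAt 𝕜 N g x)
    {ℓ : ℕ} (hℓ : ℓ ≤ N) :
    ‖iteratedFDeriv 𝕜 ℓ (fun y => f y * g y) x‖ ≤ ∑ i ∈ Finset.range (ℓ + 1),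
      (ℓ.choose i : ℝ) * ‖iteratedFDeriv 𝕜 i f x‖ * ‖iteratedFDeriv 𝕜 (ℓ - i) g x‖ := by
  obtain ⟨u, hu, hfu⟩ := hf.contDiffOn le_rfl (by simp)
  obtain ⟨v, hv, hgv⟩ := hg.contDiffOn le_rfl (by simp)
  obtain ⟨t, hts, ht, hxt⟩ := mem_nhds_iff.1 (inter_mem hu hv)
  have := norm_iteratedFDerivWithin_mul_le (hfu.mono (hts.trans inter_subset_left))
    (hgv.mono (hts.trans inter_subset_right)) ht.uniqueDiffOn hxt (by exact_mod_cast hℓ)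
  simpa only [iteratedFDerivWithin_of_isOpen _ ht hxt] using this

theorem iteratedFDeriv_add_eventuallyEq {l : Filter E} {N : ℕ} {f g : E → F}
    (hf : ∀ᶠ y in l, ContDiffAt 𝕜 N f y) (hg : ∀ᶠ y in l, ContDiffAt 𝕜 N g y) {ℓ : ℕ}
    (hℓ : ℓ ≤ N) :
    iteratedFDeriv 𝕜 ℓ (f + g) =ᶠ[l] iteratedFDeriv 𝕜 ℓ f + iteratedFDeriv 𝕜 ℓ g :=
  (hf.and hg).mono fun _ h =>
    iteratedFDeriv_add_apply (h.1.of_le (by exact_mod_cast hℓ)) (h.2.of_le (by exact_mod_cast hℓ))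

end Smoothness

section ConeEstimates

variable {E : Type*} [NormedAddCommGroup E] [NormedSpace ℝ E] {n m : ℕ}

def IsBigOCone (m : ℕ) (a : ℤ) (f : E → ℝ) : Prop :=
  (∀ᶠ y in 𝓝[≠] (0 : E), ContDiffAt ℝ m f y) ∧
    ∀ ℓ ≤ m, iteratedFDeriv ℝ ℓ f =O[𝓝[≠] 0] fun y => ‖y‖ ^ ((a : ℝ) - ℓ)

theorem isLittleOCone_iff {k : ℤ} {φ : EuclideanSpace ℝ (Fin n) → ℝ} :
    IsLittleOCone n m k φ ↔ (∀ᶠ y in 𝓝[≠] 0, ContDiffAt ℝ m φ y) ∧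
      ∀ ℓ ≤ m, iteratedFDeriv ℝ ℓ φ =o[𝓝[≠] 0] fun y => ‖y‖ ^ ((k : ℝ) - ℓ) := by
  simp only [IsLittleOCone, ← exists_contDiffOn_ball_diff_iff,
    tendsto_norm_rpow_mul_norm_iff_isLittleO]
  constructor
  · rintro ⟨ε, hε, hφ, hD⟩
    exact ⟨⟨ε, hε, hφ⟩, hD⟩
  · rintro ⟨⟨ε, hε, hφ⟩, hD⟩
    exact ⟨ε, hε, hφ, hD⟩

namespace IsBigOCone

variable {a b : ℤ} {f g : E → ℝ}

theorem zero : IsBigOCone m a (0 : E → ℝ) :=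
  ⟨Eventually.of_forall fun _ => contDiffAt_const, fun ℓ _ => by
    rw [iteratedFDeriv_zero]; exact isBigO_zero _ _⟩

theorem add (hf : IsBigOCone m a f) (hg : IsBigOCone m a g) : IsBigOCone m a (f + g) :=
  ⟨(hf.1.and hg.1).mono fun _ h => h.1.add h.2, fun ℓ hℓ =>
    ((hf.2 ℓ hℓ).add (hg.2 ℓ hℓ)).congr' (iteratedFDeriv_add_eventuallyEq hf.1 hg.1 hℓ).symm
      EventuallyEq.rfl⟩

theorem sum {ι : Type*} {s : Finset ι} {F : ι → E → ℝ} (h : ∀ i ∈ s, IsBigOCone m a (F i)) :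
    IsBigOCone m a (∑ i ∈ s, F i) :=
  Finset.sum_induction F (IsBigOCone m a) (fun _ _ => add) zero h

theorem mono (hab : b ≤ a) (hf : IsBigOCone m a f) : IsBigOCone m b f :=
  ⟨hf.1, fun ℓ hℓ => (hf.2 ℓ hℓ).trans (isBigO_norm_rpow_of_le (by gcongr))⟩

theorem isLittleOCone {f : EuclideanSpace ℝ (Fin n) → ℝ} (hab : b < a) (hf : IsBigOCone m a f) :
    IsLittleOCone n m b f :=
  isLittleOCone_iff.2 ⟨hf.1, fun ℓ hℓ =>
    (hf.2 ℓ hℓ).trans_isLittleO (isLittleO_norm_rpow_of_lt (by gcongr))⟩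

end IsBigOCone

namespace IsLittleOCone

variable {a b : ℤ} {f g : EuclideanSpace ℝ (Fin n) → ℝ}

theorem zero : IsLittleOCone n m a 0 :=
  isLittleOCone_iff.2 ⟨Eventually.of_forall fun _ => contDiffAt_const, fun ℓ _ => by
    rw [iteratedFDeriv_zero]; exact isLittleO_zero _ _⟩

theorem add (hf : IsLittleOCone n m a f) (hg : IsLittleOCone n m a g) :
    IsLittleOCone n m a (f + g) := by
  rw [isLittleOCone_iff] at *
  exact ⟨(hf.1.and hg.1).mono fun _ h => h.1.add h.2, fun ℓ hℓ =>
    ((hf.2 ℓ hℓ).add (hg.2 ℓ hℓ)).congr' (iteratedFDeriv_add_eventuallyEq hf.1 hg.1 hℓ).symm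
      EventuallyEq.rfl⟩

theorem sum {ι : Type*} {s : Finset ι} {F : ι → EuclideanSpace ℝ (Fin n) → ℝ}
    (h : ∀ i ∈ s, IsLittleOCone n m a (F i)) : IsLittleOCone n m a (∑ i ∈ s, F i) :=
  Finset.sum_induction F (IsLittleOCone n m a) (fun _ _ => add) zero h

theorem isBigOCone (hf : IsLittleOCone n m a f) : IsBigOCone m a f := by
  rw [isLittleOCone_iff] at hf
  exact ⟨hf.1, fun ℓ hℓ => (hf.2 ℓ hℓ).isBigO⟩

theorem mono (hab : b ≤ a) (hf : IsLittleOCone n m a f) : IsLittleOCone n m b f := by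
  rw [isLittleOCone_iff] at *
  exact ⟨hf.1, fun ℓ hℓ => (hf.2 ℓ hℓ).trans_isBigO (isBigO_norm_rpow_of_le (by gcongr))⟩

end IsLittleOCone

end ConeEstimates

section Product

variable {n m : ℕ} {a b : ℤ}

theorem IsBigOCone.mul_isLittleOCone {f g : EuclideanSpace ℝ (Fin n) → ℝ}
    (hf : IsBigOCone m a f) (hg : IsLittleOCone n m b g) :
    IsLittleOCone n m (a + b) (f * g) := by
  rw [isLittleOCone_iff] at hg ⊢
  refine ⟨(hf.1.and hg.1).mono fun _ h => h.1.mul h.2, fun ℓ hℓ => ?_⟩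
  have hLeibniz : iteratedFDeriv ℝ ℓ (f * g) =O[𝓝[≠] 0] fun y =>
      ∑ i ∈ Finset.range (ℓ + 1),
        (ℓ.choose i : ℝ) * ‖iteratedFDeriv ℝ i f y‖ * ‖iteratedFDeriv ℝ (ℓ - i) g y‖ := by
    refine IsBigO.of_bound 1 ((hf.1.and hg.1).mono fun y h => ?_)
    rw [one_mul, Real.norm_of_nonneg (by positivity)]
    exact norm_iteratedFDeriv_mul_le_of_contDiffAt h.1 h.2 hℓ
  refine hLeibniz.trans_isLittleO (IsLittleO.fun_sum fun i hi => ?_)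
  have hi : i ≤ ℓ := Nat.lt_succ_iff.1 (Finset.mem_range.1 hi)
  have hterm := ((hf.2 i (hi.trans hℓ)).norm_left.mul_isLittleO
    (hg.2 (ℓ - i) ((Nat.sub_le ℓ i).trans hℓ)).norm_left).const_mul_left (ℓ.choose i : ℝ)
  have hexp : ((a + b : ℤ) : ℝ) - ℓ = ((a : ℝ) - i) + ((b : ℝ) - (ℓ - i : ℕ)) := by
    push_cast [Nat.cast_sub hi]; ring
  rw [hexp]
  exact (hterm.congr_left fun y => by ring).congr' EventuallyEq.rfl
    (norm_rpow_add_eventuallyEq _ _).symm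

end Product

section Homogeneous

variable {E : Type*} [NormedAddCommGroup E] [NormedSpace ℝ E] {f : E → ℝ} {d : ℕ}

theorem iteratedFDeriv_smul_of_homogeneous {ℓ : ℕ}
    (hhom : ∀ c : ℝ, 0 < c → ∀ y, f (c • y) = c ^ d * f y) {c : ℝ} (hc : 0 < c) {x : E}
    (hx : ContDiffAt ℝ ℓ f x) :
    c ^ ℓ • iteratedFDeriv ℝ ℓ f (c • x) = c ^ d • iteratedFDeriv ℝ ℓ f x := by
  let L : E ≃L[ℝ] E := ContinuousLinearEquiv.smulLeft (Units.mk0 c hc.ne')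
  have hcomp : iteratedFDeriv ℝ ℓ (f ∘ L) x = c ^ ℓ • iteratedFDeriv ℝ ℓ f (c • x) := by
    have := L.iteratedFDerivWithin_comp_right f uniqueDiffOn_univ (mem_univ (L x)) ℓ
    rw [preimage_univ, iteratedFDerivWithin_univ, iteratedFDerivWithin_univ] at this
    ext v
    simp [this, L, ContinuousMultilinearMap.map_smul_univ]
  have hfL : f ∘ L = fun y => c ^ d • f y := funext fun y => hhom c hc y
  rw [← hcomp, hfL, iteratedFDeriv_const_smul_apply' hx]

theorem IsBigOCone.of_homogeneous [FiniteDimensional ℝ E] {m : ℕ}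
    (hf : ContDiffOn ℝ m f {0}ᶜ) (hhom : ∀ c : ℝ, 0 < c → ∀ y, f (c • y) = c ^ d * f y) :
    IsBigOCone m d f := by
  have hsmooth : ∀ y ∈ ({0}ᶜ : Set E), ContDiffAt ℝ m f y := fun y hy =>
    hf.contDiffAt (isOpen_compl_singleton.mem_nhds hy)
  refine ⟨eventually_nhdsWithin_of_forall hsmooth, fun ℓ hℓ => ?_⟩
  have hℓ' : (ℓ : WithTop ℕ∞) ≤ m := by exact_mod_cast hℓ
  have hsphere : Metric.sphere (0 : E) 1 ⊆ {0}ᶜ := fun u hu =>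
    Metric.ne_of_mem_sphere hu one_ne_zero
  obtain ⟨C, hC⟩ := (isCompact_sphere (0 : E) 1).exists_bound_of_continuousOn fun u hu =>
    ((hsmooth u (hsphere hu)).continuousAt_iteratedFDeriv hℓ').continuousWithinAt
  refine IsBigO.of_bound C (eventually_nhdsWithin_of_forall fun y hy => ?_)
  have hc : 0 < ‖y‖ := norm_pos_iff.2 hy
  set u := ‖y‖⁻¹ • y with hu_def
  have hu : u ∈ Metric.sphere (0 : E) 1 := by simp [u, norm_smul, hc.ne']
  have hscale := congrArg norm (iteratedFDeriv_smul_of_homogeneous hhom hc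
    ((hsmooth u (hsphere hu)).of_le hℓ'))
  rw [hu_def, smul_inv_smul₀ hc.ne', norm_smul, norm_smul, Real.norm_of_nonneg (by positivity),
    Real.norm_of_nonneg (by positivity)] at hscale
  have hrpow : ‖y‖ ^ (((d : ℤ) : ℝ) - ℓ) = ‖y‖ ^ d / ‖y‖ ^ ℓ := by
    rw [Int.cast_natCast, Real.rpow_sub hc, Real.rpow_natCast, Real.rpow_natCast]
  rw [Real.norm_of_nonneg (by positivity), hrpow, mul_div_assoc', le_div_iff₀ (by positivity)]
  nlinarith [hC u hu, pow_pos hc d]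

end Homogeneous

section Polynomial

open MvPolynomial

theorem MvPolynomial.IsHomogeneous.eval_smul {σ R : Type*} [CommSemiring R]
    {P : MvPolynomial σ R} {d : ℕ} (hP : P.IsHomogeneous d) (c : R) (x : σ → R) :
    eval (c • x) P = c ^ d * eval x P := by
  rw [eval_eq, eval_eq, Finset.mul_sum]
  refine Finset.sum_congr rfl fun μ hμ => ?_
  have hdeg : ∑ i ∈ μ.support, μ i = d := by
    rw [← hP (mem_support_iff.1 hμ), Finsupp.weight_apply]
    simp [Finsupp.sum]
  simp only [Pi.smul_apply, smul_eq_mul, mul_pow, Finset.prod_mul_distrib,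
    Finset.prod_pow_eq_pow_sum, hdeg]
  ring

variable {n : ℕ}

theorem contDiff_eval_euclidean (N : WithTop ℕ∞) (P : MvPolynomial (Fin n) ℝ) :
    ContDiff ℝ N fun y : EuclideanSpace ℝ (Fin n) => eval (fun i => y i) P := by
  induction P using MvPolynomial.induction_on with
  | C a => simpa using contDiff_const
  | add p q hp hq => simpa using hp.add hq
  | mul_X p i hp => simpa using hp.mul (EuclideanSpace.proj i).contDiff

theorem isBigOCone_eval {m d : ℕ} {P : MvPolynomial (Fin n) ℝ} (hP : P.IsHomogeneous d) :
    IsBigOCone m d fun y : EuclideanSpace ℝ (Fin n) => eval (fun i => y i) P :=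
  .of_homogeneous (contDiff_eval_euclidean _ P).contDiffOn fun c _ _ => hP.eval_smul c _

theorem isBigOCone_norm_mul_eval {m e : ℕ} {Q : MvPolynomial (Fin n) ℝ}
    (hQ : Q.IsHomogeneous e) :
    IsBigOCone m (e + 1 : ℕ) fun y : EuclideanSpace ℝ (Fin n) => ‖y‖ * eval (fun i => y i) Q := by
  refine .of_homogeneous (fun y hy => ?_) fun c hc y => ?_
  · exact ((contDiffAt_norm ℝ hy).mul (contDiff_eval_euclidean _ Q).contDiffAt).contDiffWithinAt
  · change ‖c • y‖ * eval (c • fun i => y i) Q = _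
    rw [hQ.eval_smul, norm_smul, Real.norm_of_nonneg hc.le]
    ring

noncomputable def normSqPoly (n : ℕ) : MvPolynomial (Fin n) ℝ := ∑ i, X i ^ 2

theorem isHomogeneous_normSqPoly : (normSqPoly n).IsHomogeneous 2 :=
  IsHomogeneous.sum _ _ _ fun i _ => isHomogeneous_X_pow i 2

theorem eval_normSqPoly (y : EuclideanSpace ℝ (Fin n)) :
    eval (fun i => y i) (normSqPoly n) = ‖y‖ ^ 2 := by
  simp [normSqPoly, EuclideanSpace.norm_sq_eq]

end Polynomial

section AdmissibleExpansion

open MvPolynomial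

variable {n : ℕ}

noncomputable def admissibleTerm (P Q : MvPolynomial (Fin n) ℝ) (y : EuclideanSpace ℝ (Fin n)) :
    ℝ :=
  eval (fun i => y i) P + ‖y‖ * eval (fun i => y i) Q

theorem IsBigOCone.admissibleTerm {m p : ℕ} {P Q : MvPolynomial (Fin n) ℝ}
    (hp : 1 ≤ p) (hP : P.IsHomogeneous p) (hQ : Q.IsHomogeneous (p - 1)) :
    IsBigOCone m p (admissibleTerm P Q) := by
  have hrQ := isBigOCone_norm_mul_eval (m := m) hQ
  rw [Nat.sub_add_cancel hp] at hrQ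
  exact (isBigOCone_eval hP).add hrQ

theorem admissibleTerm_mul (P₁ Q₁ P₂ Q₂ : MvPolynomial (Fin n) ℝ) (y : EuclideanSpace ℝ (Fin n)) :
    admissibleTerm P₁ Q₁ y * admissibleTerm P₂ Q₂ y =
      admissibleTerm (P₁ * P₂ + normSqPoly n * (Q₁ * Q₂)) (P₁ * Q₂ + Q₁ * P₂) y := by
  simp only [admissibleTerm, map_add, map_mul, eval_normSqPoly]
  ring

theorem admissibleTerm_sum {ι : Type*} (s : Finset ι) (P Q : ι → MvPolynomial (Fin n) ℝ)
    (y : EuclideanSpace ℝ (Fin n)) :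
    admissibleTerm (∑ i ∈ s, P i) (∑ i ∈ s, Q i) y = ∑ i ∈ s, admissibleTerm (P i) (Q i) y := by
  simp only [admissibleTerm, map_sum, Finset.mul_sum, Finset.sum_add_distrib]

def pairsWithSum (k s : ℕ) : Finset (ℕ × ℕ) :=
  (Finset.Icc 1 k ×ˢ Finset.Icc 1 k).filter fun x => x.1 + x.2 = s

theorem mem_pairsWithSum {k s : ℕ} {x : ℕ × ℕ} :
    x ∈ pairsWithSum k s ↔ (1 ≤ x.1 ∧ x.1 ≤ k) ∧ (1 ≤ x.2 ∧ x.2 ≤ k) ∧ x.1 + x.2 = s := by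
  simp [pairsWithSum, and_assoc]

theorem sq_sum_Icc_eq {R : Type*} [CommSemiring R] (f : ℕ → R) (k N : ℕ) :
    (∑ p ∈ Finset.Icc 1 k, f p) ^ 2 =
      ∑ s ∈ Finset.Icc 2 N, ∑ x ∈ pairsWithSum k s, f x.1 * f x.2 +
        ∑ x ∈ (Finset.Icc 1 k ×ˢ Finset.Icc 1 k).filter (fun x => N < x.1 + x.2),
          f x.1 * f x.2 := by
  have hmaps : ∀ x ∈ (Finset.Icc 1 k ×ˢ Finset.Icc 1 k).filter (fun x => x.1 + x.2 ≤ N),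
      x.1 + x.2 ∈ Finset.Icc 2 N := by
    intro x hx
    simp only [Finset.mem_filter, Finset.mem_product, Finset.mem_Icc] at hx
    exact Finset.mem_Icc.2 ⟨by omega, hx.2⟩
  rw [sq, Finset.sum_mul_sum, ← Finset.sum_product',
    ← Finset.sum_filter_add_sum_filter_not _ fun x => x.1 + x.2 ≤ N,
    ← Finset.sum_fiberwise_of_maps_to hmaps]
  simp only [not_le, Finset.filter_filter]
  congr 1
  refine Finset.sum_congr rfl fun s hs => Finset.sum_congr ?_ fun _ _ => rfl
  ext x
  rw [Finset.mem_Icc] at hs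
  simp only [Finset.mem_filter, mem_pairsWithSum, Finset.mem_product, Finset.mem_Icc]
  omega

noncomputable def sqExpansionP (P Q : ℕ → MvPolynomial (Fin n) ℝ) (k s : ℕ) :
    MvPolynomial (Fin n) ℝ :=
  ∑ x ∈ pairsWithSum k s, (P x.1 * P x.2 + normSqPoly n * (Q x.1 * Q x.2))

noncomputable def sqExpansionQ (P Q : ℕ → MvPolynomial (Fin n) ℝ) (k s : ℕ) :
    MvPolynomial (Fin n) ℝ :=
  ∑ x ∈ pairsWithSum k s, (P x.1 * Q x.2 + Q x.1 * P x.2)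

theorem admissibleTerm_sqExpansion (P Q : ℕ → MvPolynomial (Fin n) ℝ) (k s : ℕ)
    (y : EuclideanSpace ℝ (Fin n)) :
    admissibleTerm (sqExpansionP P Q k s) (sqExpansionQ P Q k s) y =
      ∑ x ∈ pairsWithSum k s,
        admissibleTerm (P x.1) (Q x.1) y * admissibleTerm (P x.2) (Q x.2) y := by
  simp only [sqExpansionP, sqExpansionQ, admissibleTerm_sum, admissibleTerm_mul]

variable {P Q : ℕ → MvPolynomial (Fin n) ℝ} {k : ℕ}

theorem isHomogeneous_sqExpansionP (hP : ∀ p, 1 ≤ p → p ≤ k → (P p).IsHomogeneous p)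
    (hQ : ∀ p, 1 ≤ p → p ≤ k → (Q p).IsHomogeneous (p - 1)) (s : ℕ) :
    (sqExpansionP P Q k s).IsHomogeneous s := by
  refine IsHomogeneous.sum _ _ _ fun x hx => ?_
  obtain ⟨⟨h₁, h₁'⟩, ⟨h₂, h₂'⟩, rfl⟩ := mem_pairsWithSum.1 hx
  refine ((hP _ h₁ h₁').mul (hP _ h₂ h₂')).add ?_
  convert isHomogeneous_normSqPoly.mul ((hQ _ h₁ h₁').mul (hQ _ h₂ h₂')) using 1
  omega

theorem isHomogeneous_sqExpansionQ (hP : ∀ p, 1 ≤ p → p ≤ k → (P p).IsHomogeneous p)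
    (hQ : ∀ p, 1 ≤ p → p ≤ k → (Q p).IsHomogeneous (p - 1)) (s : ℕ) :
    (sqExpansionQ P Q k s).IsHomogeneous (s - 1) := by
  refine IsHomogeneous.sum _ _ _ fun x hx => ?_
  obtain ⟨⟨h₁, h₁'⟩, ⟨h₂, h₂'⟩, rfl⟩ := mem_pairsWithSum.1 hx
  refine IsHomogeneous.add ?_ ?_
  · convert (hP _ h₁ h₁').mul (hQ _ h₂ h₂') using 1
    omega
  · convert (hQ _ h₁ h₁').mul (hP _ h₂ h₂') using 1
    omega

end AdmissibleExpansion

theorem square_of_admissible_expansion_general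
    (n k : ℕ) (hk : 1 ≤ k)
    (ψ : EuclideanSpace ℝ (Fin n) → ℝ)
    (P Q : ℕ → MvPolynomial (Fin n) ℝ)
    (hP : ∀ p, 1 ≤ p → p ≤ k → (P p).IsHomogeneous p)
    (hQ : ∀ p, 1 ≤ p → p ≤ k → (Q p).IsHomogeneous (p - 1))
    (h : IsLittleOCone n k (k : ℤ) (fun y =>
        ψ y - ∑ p ∈ Finset.Icc 1 k,
          (MvPolynomial.eval (fun i => y i) (P p)
            + ‖y‖ * MvPolynomial.eval (fun i => y i) (Q p)))) :
    ∃ P' Q' : ℕ → MvPolynomial (Fin n) ℝ,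
      (∀ p, 2 ≤ p → p ≤ k + 1 → (P' p).IsHomogeneous p) ∧
      (∀ p, 2 ≤ p → p ≤ k + 1 → (Q' p).IsHomogeneous (p - 1)) ∧
      IsLittleOCone n k ((k : ℤ) + 1) (fun y =>
        (ψ y) ^ 2 - ∑ p ∈ Finset.Icc 2 (k + 1),
          (MvPolynomial.eval (fun i => y i) (P' p)
            + ‖y‖ * MvPolynomial.eval (fun i => y i) (Q' p))) := by
  set t : ℕ → EuclideanSpace ℝ (Fin n) → ℝ := fun p => admissibleTerm (P p) (Q p)
  set S := ∑ p ∈ Finset.Icc 1 k, t p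
  have hR : IsLittleOCone n k k (ψ - S) := by
    convert h using 2 with y
    simp [S, t, admissibleTerm]
  have ht : ∀ p ∈ Finset.Icc 1 k, IsBigOCone k p (t p) := fun p hp =>
    have ⟨h₁, h₂⟩ := Finset.mem_Icc.1 hp
    .admissibleTerm h₁ (hP p h₁ h₂) (hQ p h₁ h₂)
  have hS : IsBigOCone k 1 S :=
    .sum fun p hp => (ht p hp).mono (by exact_mod_cast (Finset.mem_Icc.1 hp).1)
  have hcross : IsLittleOCone n k (k + 1) ((S + S + (ψ - S)) * (ψ - S)) := by
    rw [add_comm (k : ℤ)]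
    exact ((hS.add hS).add (hR.isBigOCone.mono (by exact_mod_cast hk))).mul_isLittleOCone hR
  have hhigh : IsLittleOCone n k (k + 1) (∑ x ∈ (Finset.Icc 1 k ×ˢ Finset.Icc 1 k).filter
      (fun x => k + 1 < x.1 + x.2), t x.1 * t x.2) := by
    refine .sum fun x hx => ?_
    simp only [Finset.mem_filter, Finset.mem_product] at hx
    obtain ⟨⟨hx₁, hx₂⟩, hsum⟩ := hx
    refine ((ht _ hx₁).mul_isLittleOCone ((ht _ hx₂).isLittleOCone (sub_one_lt _))).mono ?_
    omega
  refine ⟨sqExpansionP P Q k, sqExpansionQ P Q k, fun s _ _ => isHomogeneous_sqExpansionP hP hQ s,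
    fun s _ _ => isHomogeneous_sqExpansionQ hP hQ s, ?_⟩
  convert hhigh.add hcross using 1
  funext y
  change ψ y ^ 2 - ∑ s ∈ _, admissibleTerm (sqExpansionP P Q k s) (sqExpansionQ P Q k s) y = _
  simp only [admissibleTerm_sqExpansion, Finset.sum_apply, Pi.add_apply, Pi.mul_apply,
    Pi.sub_apply, S, t]
  linear_combination sq_sum_Icc_eq (fun p => admissibleTerm (P p) (Q p) y) k (k + 1)

/-- if `ψ` admits an admissible expansion starting at order `1` with
remainder `o_k(r^k)`, then `ψ²` admits an admissible expansion starting at order `2`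
with remainder `o_k(r^{k+1})`. -/
theorem square_of_admissible_expansion
    (n k : ℕ) (hn : 1 ≤ n) (hk : 1 ≤ k)
    (ψ : EuclideanSpace ℝ (Fin n) → ℝ)
    (P Q : ℕ → MvPolynomial (Fin n) ℝ)
    (hP : ∀ p, 1 ≤ p → p ≤ k → (P p).IsHomogeneous p)
    (hQ : ∀ p, 1 ≤ p → p ≤ k → (Q p).IsHomogeneous (p - 1))
    (h : IsLittleOCone n k (k : ℤ) (fun y =>
        ψ y - ∑ p ∈ Finset.Icc 1 k,
          (MvPolynomial.eval (fun i => y i) (P p)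
            + ‖y‖ * MvPolynomial.eval (fun i => y i) (Q p)))) :
    ∃ P' Q' : ℕ → MvPolynomial (Fin n) ℝ,
      (∀ p, 2 ≤ p → p ≤ k + 1 → (P' p).IsHomogeneous p) ∧
      (∀ p, 2 ≤ p → p ≤ k + 1 → (Q' p).IsHomogeneous (p - 1)) ∧
      IsLittleOCone n k ((k : ℤ) + 1) (fun y =>
        (ψ y) ^ 2 - ∑ p ∈ Finset.Icc 2 (k + 1),
          (MvPolynomial.eval (fun i => y i) (P' p)
            + ‖y‖ * MvPolynomial.eval (fun i => y i) (Q' p))) :=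
  square_of_admissible_expansion_general n k hk ψ P Q hP hQ h
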